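/- With S = {A^(1), …, A^(m)} as above (A^(i) = u^(2i−2) + u^(2i−1), u^(n) = y_{n+2^n−1} y_{n+2^{n+1}−1}), let W be the set of homogeneous degree-2 difference polynomials in [S], and for n ≥ 0 let W^[n] be the set of homogeneous degree-2 difference polynomials in S^[n], where S^[0] = S and S^[n] = ([S^[n−1]])' with A' = {f·σ(g) | fg ∈ A}. Then W^[n] = W for all n ≥ 1. -/

import Mathlib

open MvPolynomial

def sigmaSpan {R : Type*} [CommRing R] (σ : R →+* R) (S : Set R) : Ideal R :=
  Ideal.span {x | ∃ a ∈ S, ∃ k : ℕ, x = (⇑σ)^[k] a}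

def primeSet {R : Type*} [CommRing R] (σ : R →+* R) (A : Set R) : Set R :=
  {x | ∃ a b : R, a * b ∈ A ∧ x = a * σ b}

def shuffle {R : Type*} [CommRing R] (σ : R →+* R) (S : Set R) : ℕ → Set R
  | 0 => S
  | n + 1 => primeSet σ (sigmaSpan σ (shuffle σ S n) : Set R)

noncomputable def shift {K : Type*} [Field K] (σK : K →+* K) :
    MvPolynomial ℕ K →+* MvPolynomial ℕ K :=
  eval₂Hom (MvPolynomial.C.comp σK) (fun n => MvPolynomial.X (n + 1))

noncomputable def uPoly (K : Type*) [Field K] (n : ℕ) : MvPolynomial ℕ K :=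
  X (n + 2 ^ n - 1) * X (n + 2 ^ (n + 1) - 1)

noncomputable def APoly (K : Type*) [Field K] (i : ℕ) : MvPolynomial ℕ K :=
  uPoly K (2 * i - 2) + uPoly K (2 * i - 1)
/-!
Let `𝔪` be the ideal generated by the variables and `T` the `K`-span of all shifts `σ^k A^(i)`.
The ideal of polynomials in `𝔪²` whose quadratic part lies in `T` contains `S`, is `σ`-stable,
and is closed under `A ↦ A'`: if `p q` lies in it, then either a constant coefficient of `p` or
`q` is nonzero and the other factor lies in it already, or the quadratic part of `p q` is the
product of the linear parts of `p` and `q`, which vanishes because no nonzero element of `T` is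
a product of two linear forms. Hence every quadratic element of `S^[n]` lies in `T ⊆ [S]`;
conversely `f = f σ(1)` puts `[S] ⊆ [S^[n-1]]` inside `S^[n]`.

That `T` contains no product `L M ≠ 0` of linear forms is read off its monomials: each is some
`σ^k u^(n) = y_a y_b` with `b - a = 2^n`, and `σ^k u^(2j)`, `σ^k u^(2j+1)` carry equal
coefficients. If the largest variable `v` of `L M` occurs only in `M`, the monomials `y_w y_v`
with `w` a variable of `L` force distances `v - w` that are incompatible modulo `3`.
-/

open Finsupp (single)

section SigmaIdeal

variable {R : Type*} [CommRing R] {σ : R →+* R} {S : Set R}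

theorem subset_sigmaSpan : S ⊆ sigmaSpan σ S := fun a ha => Ideal.subset_span ⟨a, ha, 0, rfl⟩

theorem sigmaSpan_mono {S' : Set R} (h : S ⊆ S') : sigmaSpan σ S ≤ sigmaSpan σ S' :=
  Ideal.span_mono fun _ ⟨a, ha, k, hx⟩ => ⟨a, h ha, k, hx⟩

theorem sigmaSpan_le {I : Ideal R} (hS : S ⊆ I) (hI : ∀ x ∈ I, σ x ∈ I) :
    sigmaSpan σ S ≤ I := by
  refine Ideal.span_le.mpr ?_
  rintro _ ⟨a, ha, k, rfl⟩
  induction k with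
  | zero => exact hS ha
  | succ k ih => exact Function.iterate_succ_apply' σ k a ▸ hI _ ih

theorem sigmaSpan_shuffle_subset_shuffle_succ (n : ℕ) :
    (sigmaSpan σ (shuffle σ S n) : Set R) ⊆ shuffle σ S (n + 1) :=
  fun x hx => ⟨x, 1, by rwa [mul_one], by rw [map_one, mul_one]⟩

theorem subset_shuffle : ∀ n, S ⊆ shuffle σ S n
  | 0 => subset_rfl
  | n + 1 => (subset_shuffle n).trans <|
      subset_sigmaSpan.trans (sigmaSpan_shuffle_subset_shuffle_succ n)

theorem shuffle_subset {I : Ideal R} (hS : S ⊆ I) (hI : ∀ x ∈ I, σ x ∈ I)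
    (hmul : ∀ a b, a * b ∈ I → a * σ b ∈ I) : ∀ n, shuffle σ S n ⊆ I
  | 0 => hS
  | n + 1 => by
    rintro _ ⟨a, b, hab, rfl⟩
    exact hmul a b (sigmaSpan_le (shuffle_subset hS hI hmul n) hI hab)

end SigmaIdeal

namespace MvPolynomial

variable {σ R : Type*} [CommRing R]

theorem mem_pow_idealOfVars_iff_homogeneousComponent {n : ℕ} {p : MvPolynomial σ R} :
    p ∈ idealOfVars σ R ^ n ↔ ∀ i < n, homogeneousComponent i p = 0 := by
  rw [mem_pow_idealOfVars_iff']
  refine ⟨fun h i hi => ?_, fun h x hx => ?_⟩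
  · ext x
    rw [coeff_homogeneousComponent, coeff_zero]
    split_ifs with hx
    · exact h x (hx ▸ hi)
    · rfl
  · simpa [coeff_homogeneousComponent] using congr_arg (coeff x) (h _ hx)

theorem mem_idealOfVars_iff_coeff_zero {p : MvPolynomial σ R} :
    p ∈ idealOfVars σ R ↔ coeff 0 p = 0 := by
  simpa using mem_pow_idealOfVars_iff_homogeneousComponent (n := 1) (p := p)

theorem sub_C_coeff_zero_mem_idealOfVars (p : MvPolynomial σ R) :
    p - C (coeff 0 p) ∈ idealOfVars σ R := by
  simp [mem_idealOfVars_iff_coeff_zero]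

theorem homogeneousComponent_mem_pow_idealOfVars (n : ℕ) (p : MvPolynomial σ R) :
    homogeneousComponent n p ∈ idealOfVars σ R ^ n := by
  rw [mem_pow_idealOfVars_iff_homogeneousComponent]
  intro i hi
  rw [homogeneousComponent_of_mem (homogeneousComponent_mem n p), if_neg hi.ne]

theorem homogeneousComponent_eq_zero_of_mem_pow {n : ℕ} {p : MvPolynomial σ R}
    (hp : p ∈ idealOfVars σ R ^ (n + 1)) : homogeneousComponent n p = 0 :=
  mem_pow_idealOfVars_iff_homogeneousComponent.mp hp n n.lt_succ_self

theorem sub_homogeneousComponent_mem_pow_succ {n : ℕ} {p : MvPolynomial σ R}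
    (hp : p ∈ idealOfVars σ R ^ n) :
    p - homogeneousComponent n p ∈ idealOfVars σ R ^ (n + 1) := by
  rw [mem_pow_idealOfVars_iff_homogeneousComponent] at hp ⊢
  intro i hi
  rw [map_sub, homogeneousComponent_of_mem (homogeneousComponent_mem n p)]
  rcases (Nat.lt_succ_iff.mp hi).lt_or_eq with hi | rfl
  · rw [if_neg hi.ne, hp i hi, sub_zero]
  · rw [if_pos rfl, sub_self]

theorem mul_mem_pow_succ_idealOfVars {n : ℕ} {p q : MvPolynomial σ R}
    (hp : p ∈ idealOfVars σ R ^ n) (hq : q ∈ idealOfVars σ R) :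
    p * q ∈ idealOfVars σ R ^ (n + 1) :=
  pow_succ (idealOfVars σ R) n ▸ Ideal.mul_mem_mul hp hq

theorem homogeneousComponent_two_mul_of_mem {p q : MvPolynomial σ R}
    (hq : q ∈ idealOfVars σ R ^ 2) :
    homogeneousComponent 2 (p * q) = coeff 0 p • homogeneousComponent 2 q := by
  have hrest := mul_mem_pow_succ_idealOfVars hq (sub_C_coeff_zero_mem_idealOfVars p)
  rw [show p * q = C (coeff 0 p) * q + q * (p - C (coeff 0 p)) by ring, map_add,
    homogeneousComponent_eq_zero_of_mem_pow hrest, add_zero, homogeneousComponent_C_mul,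
    smul_eq_C_mul]

theorem homogeneousComponent_two_mul_of_mem_idealOfVars {p q : MvPolynomial σ R}
    (hp : p ∈ idealOfVars σ R) (hq : q ∈ idealOfVars σ R) :
    homogeneousComponent 2 (p * q) = homogeneousComponent 1 p * homogeneousComponent 1 q := by
  set p₁ := homogeneousComponent 1 p
  set q₁ := homogeneousComponent 1 q
  have hp₁ : p₁ ∈ idealOfVars σ R := by
    simpa using homogeneousComponent_mem_pow_idealOfVars 1 p
  have hrest : (p - p₁) * q + (q - q₁) * p₁ ∈ idealOfVars σ R ^ 3 :=
    add_mem (mul_mem_pow_succ_idealOfVars (sub_homogeneousComponent_mem_pow_succ (by simpa)) hq)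
      (mul_mem_pow_succ_idealOfVars (sub_homogeneousComponent_mem_pow_succ (by simpa)) hp₁)
  rw [show p * q = p₁ * q₁ + ((p - p₁) * q + (q - q₁) * p₁) by ring, map_add,
    homogeneousComponent_eq_zero_of_mem_pow hrest, add_zero,
    homogeneousComponent_eq_self ((homogeneousComponent_isHomogeneous 1 p).mul
      (homogeneousComponent_isHomogeneous 1 q))]

theorem mem_pow_idealOfVars_of_mul_mem {K : Type*} [Field K] {n : ℕ} {p q : MvPolynomial σ K}
    (hp : coeff 0 p ≠ 0) (hpq : p * q ∈ idealOfVars σ K ^ n) : q ∈ idealOfVars σ K ^ n := by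
  induction n with
  | zero => simp
  | succ n ih =>
    have hq := ih (Ideal.pow_le_pow_right n.le_succ hpq)
    have hCq : C (coeff 0 p) * q ∈ idealOfVars σ K ^ (n + 1) := by
      rw [show C (coeff 0 p) * q = p * q - q * (p - C (coeff 0 p)) by ring]
      exact sub_mem hpq (mul_mem_pow_succ_idealOfVars hq (sub_C_coeff_zero_mem_idealOfVars p))
    simpa [← mul_assoc, ← C_mul, hp] using Ideal.mul_mem_left _ (C (coeff 0 p)⁻¹) hCq

theorem map_homogeneousComponent {S : Type*} [CommRing S] (g : R →+* S) (n : ℕ)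
    (p : MvPolynomial σ R) :
    map g (homogeneousComponent n p) = homogeneousComponent n (map g p) := by
  ext d
  simp only [coeff_map, coeff_homogeneousComponent]
  split_ifs <;> simp

theorem coeff_mul_of_isHomogeneous_one [DecidableEq σ] {L : MvPolynomial σ R}
    (hL : L.IsHomogeneous 1) (M : MvPolynomial σ R) (ν : σ →₀ ℕ) :
    coeff ν (L * M) =
      ∑ w ∈ ν.support, coeff (single w 1) L * coeff (ν - single w 1) M := by
  have hL' : L ∈ Submodule.span R (Set.range X) := by
    rw [← homogeneousSubmodule_one_eq_span_X]; exact hL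
  clear hL
  induction hL' using Submodule.span_induction with
  | mem x hx =>
    obtain ⟨v, rfl⟩ := hx
    simp [coeff_X_mul', coeff_X, Finsupp.single_left_inj]
  | zero => simp
  | add x y _ _ hx hy => simp [add_mul, hx, hy, Finset.sum_add_distrib]
  | smul c x _ hx => simp [hx, Finset.mul_sum, mul_assoc]

theorem coeff_single_add_single_mul [DecidableEq σ] {L : MvPolynomial σ R}
    (hL : L.IsHomogeneous 1) (M : MvPolynomial σ R) {u v : σ} (huv : u ≠ v) :
    coeff (single u 1 + single v 1) (L * M) =
      coeff (single u 1) L * coeff (single v 1) M +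
        coeff (single v 1) L * coeff (single u 1) M := by
  rw [coeff_mul_of_isHomogeneous_one hL,
    Finsupp.support_single_add_single huv one_ne_zero one_ne_zero,
    Finset.sum_pair huv, add_tsub_cancel_left, add_tsub_cancel_right]

theorem coeff_single_add_self_mul [DecidableEq σ] {L : MvPolynomial σ R}
    (hL : L.IsHomogeneous 1) (M : MvPolynomial σ R) (u : σ) :
    coeff (single u 1 + single u 1) (L * M) =
      coeff (single u 1) L * coeff (single u 1) M := by
  have hsupp : (single u 1 + single u 1 : σ →₀ ℕ).support = {u} := by
    rw [← Finsupp.single_add, Finsupp.support_single _ (by norm_num)]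
  rw [coeff_mul_of_isHomogeneous_one hL, hsupp, Finset.sum_singleton, add_tsub_cancel_left]

theorem exists_coeff_single_ne_zero {L : MvPolynomial σ R} (hL : L.IsHomogeneous 1)
    (hL0 : L ≠ 0) : ∃ w, coeff (single w 1) L ≠ 0 := by
  classical
  by_contra! h
  exact hL0 (ext _ _ fun ν => by simpa [h] using coeff_mul_of_isHomogeneous_one hL 1 ν)

theorem exists_max_coeff_single_ne_zero {L : MvPolynomial ℕ R} (hL : L.IsHomogeneous 1)
    (hL0 : L ≠ 0) : ∃ u, coeff (single u 1) L ≠ 0 ∧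
      ∀ w, coeff (single w 1) L ≠ 0 → w ≤ u :=
  Set.exists_max_image {w | coeff (single w 1) L ≠ 0} id
    ((L.support.finite_toSet.preimage (Finsupp.single_left_injective one_ne_zero).injOn).subset
      fun _ => mem_support_iff.mpr)
    (exists_coeff_single_ne_zero hL hL0)

end MvPolynomial

section QuadIdeal

variable {K σ : Type*} [Field K]

def quadIdeal (T : Submodule K (MvPolynomial σ K)) : Ideal (MvPolynomial σ K) where
  carrier := {f | f ∈ idealOfVars σ K ^ 2 ∧ homogeneousComponent 2 f ∈ T}
  zero_mem' := ⟨zero_mem _, by simp⟩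
  add_mem' hf hg := ⟨add_mem hf.1 hg.1, by simpa only [map_add] using add_mem hf.2 hg.2⟩
  smul_mem' c f hf := ⟨Ideal.mul_mem_left _ c hf.1, by
    rw [smul_eq_mul, homogeneousComponent_two_mul_of_mem hf.1]
    exact T.smul_mem _ hf.2⟩

variable {T : Submodule K (MvPolynomial σ K)}

theorem pow_three_le_quadIdeal : idealOfVars σ K ^ 3 ≤ quadIdeal T := fun f hf =>
  ⟨Ideal.pow_le_pow_right (by norm_num) hf, by
    rw [homogeneousComponent_eq_zero_of_mem_pow hf]; exact zero_mem T⟩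

theorem mem_quadIdeal_of_isHomogeneous {f : MvPolynomial σ K} (hf : f.IsHomogeneous 2)
    (hfT : f ∈ T) : f ∈ quadIdeal T :=
  ⟨homogeneousComponent_eq_self hf ▸ homogeneousComponent_mem_pow_idealOfVars 2 f,
    by rwa [homogeneousComponent_eq_self hf]⟩

theorem mem_quadIdeal_of_mul_mem {p q : MvPolynomial σ K} (hp : coeff 0 p ≠ 0)
    (hpq : p * q ∈ quadIdeal T) : q ∈ quadIdeal T := by
  have hq := mem_pow_idealOfVars_of_mul_mem hp hpq.1
  refine ⟨hq, ?_⟩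
  have h := hpq.2
  rwa [homogeneousComponent_two_mul_of_mem hq, Submodule.smul_mem_iff _ hp] at h

end QuadIdeal

section Shift

variable {K : Type*} [Field K] (σK : K →+* K)

theorem shift_X (n : ℕ) : shift σK (X n) = X (n + 1) := by
  simp [shift]

theorem shift_smul (c : K) (f : MvPolynomial ℕ K) :
    shift σK (c • f) = σK c • shift σK f := by
  simp [shift, smul_eq_C_mul]

theorem shift_eq_map_rename (f : MvPolynomial ℕ K) :
    shift σK f = map σK (rename (· + 1) f) := by
  change shift σK f = ((map σK).comp (rename (· + 1)).toRingHom) f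
  congr 1
  ext <;> simp [shift]

theorem homogeneousComponent_shift (n : ℕ) (f : MvPolynomial ℕ K) :
    homogeneousComponent n (shift σK f) = shift σK (homogeneousComponent n f) := by
  rw [shift_eq_map_rename, shift_eq_map_rename, rename_homogeneousComponent,
    map_homogeneousComponent]

theorem shift_mem_pow_idealOfVars {n : ℕ} {f : MvPolynomial ℕ K}
    (hf : f ∈ idealOfVars ℕ K ^ n) : shift σK f ∈ idealOfVars ℕ K ^ n := by
  rw [mem_pow_idealOfVars_iff_homogeneousComponent] at hf ⊢
  intro i hi
  rw [homogeneousComponent_shift, hf i hi, map_zero]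

variable {T : Submodule K (MvPolynomial ℕ K)}

theorem shift_mem_quadIdeal (hT : ∀ t ∈ T, shift σK t ∈ T) {f : MvPolynomial ℕ K}
    (hf : f ∈ quadIdeal T) : shift σK f ∈ quadIdeal T :=
  ⟨shift_mem_pow_idealOfVars σK hf.1, by rw [homogeneousComponent_shift]; exact hT _ hf.2⟩

theorem mul_shift_mem_quadIdeal (hT : ∀ t ∈ T, shift σK t ∈ T)
    (hT₁ : ∀ L M : MvPolynomial ℕ K, L.IsHomogeneous 1 → M.IsHomogeneous 1 →
      L * M ∈ T → L * M = 0)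
    {p q : MvPolynomial ℕ K} (hpq : p * q ∈ quadIdeal T) : p * shift σK q ∈ quadIdeal T := by
  by_cases hp : coeff 0 p = 0
  · by_cases hq : coeff 0 q = 0
    · rw [← mem_idealOfVars_iff_coeff_zero] at hp hq
      have hpq₂ := hpq.2
      rw [homogeneousComponent_two_mul_of_mem_idealOfVars hp hq] at hpq₂
      apply pow_three_le_quadIdeal
      have hσq : shift σK q ∈ idealOfVars ℕ K := by
        simpa using shift_mem_pow_idealOfVars σK (n := 1) (by simpa using hq)
      rcases mul_eq_zero.mp (hT₁ _ _ (homogeneousComponent_isHomogeneous 1 p)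
        (homogeneousComponent_isHomogeneous 1 q) hpq₂) with h | h
      · have hp₂ := sub_homogeneousComponent_mem_pow_succ (n := 1) (p := p) (by simpa using hp)
        rw [h, sub_zero] at hp₂
        exact mul_mem_pow_succ_idealOfVars hp₂ hσq
      · have hq₂ := sub_homogeneousComponent_mem_pow_succ (n := 1) (p := q) (by simpa using hq)
        rw [h, sub_zero] at hq₂
        exact mul_comm (shift σK q) p ▸
          mul_mem_pow_succ_idealOfVars (shift_mem_pow_idealOfVars σK hq₂) hp
    · exact Ideal.mul_mem_right _ _ (mem_quadIdeal_of_mul_mem hq (mul_comm p q ▸ hpq))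
  · exact Ideal.mul_mem_left _ _ (shift_mem_quadIdeal σK hT (mem_quadIdeal_of_mul_mem hp hpq))

end Shift

-- `σ^k u^(n) = y_(uLo n k) * y_(uHi n k)`, a monomial with exponent vector `uExp n k`.
def uLo (n k : ℕ) : ℕ := n + 2 ^ n - 1 + k

def uHi (n k : ℕ) : ℕ := n + 2 ^ (n + 1) - 1 + k

noncomputable def uExp (n k : ℕ) : ℕ →₀ ℕ :=
  single (uLo n k) 1 + single (uHi n k) 1

theorem uHi_eq_uLo_add (n k : ℕ) : uHi n k = uLo n k + 2 ^ n := by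
  have := Nat.one_le_two_pow (n := n)
  rw [uHi, uLo, pow_succ]; omega

theorem uLo_succ (n k : ℕ) : uLo (n + 1) k = uHi n k + 1 := by
  have := Nat.one_le_two_pow (n := n + 1)
  rw [uHi, uLo]; omega

theorem uLo_lt_uHi (n k : ℕ) : uLo n k < uHi n k := by
  rw [uHi_eq_uLo_add]; exact Nat.lt_add_of_pos_right (Nat.two_pow_pos n)

theorem single_add_single_eq_iff {a b c d : ℕ} (hab : a ≤ b) (hcd : c ≤ d) :
    (single a 1 + single b 1 : ℕ →₀ ℕ) = single c 1 + single d 1 ↔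
      a = c ∧ b = d := by
  refine ⟨fun h => ?_, fun ⟨hac, hbd⟩ => hac ▸ hbd ▸ rfl⟩
  have ha := DFunLike.congr_fun h a
  have hb := DFunLike.congr_fun h b
  have hc := DFunLike.congr_fun h c
  simp only [Finsupp.add_apply, Finsupp.single_apply] at ha hb hc
  split_ifs at ha hb hc <;> omega

theorem uExp_inj {n k n' k' : ℕ} : uExp n k = uExp n' k' ↔ n = n' ∧ k = k' := by
  refine ⟨fun h => ?_, fun ⟨hn, hk⟩ => hn ▸ hk ▸ rfl⟩
  obtain ⟨hlo, hhi⟩ :=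
    (single_add_single_eq_iff (uLo_lt_uHi n k).le (uLo_lt_uHi n' k').le).mp h
  rw [uHi_eq_uLo_add, uHi_eq_uLo_add, hlo, Nat.add_left_cancel_iff] at hhi
  have hn := Nat.pow_right_injective le_rfl hhi
  subst hn
  exact ⟨rfl, by simpa [uLo] using hlo⟩

theorem two_pow_mod_three_of_even (j : ℕ) : 2 ^ (2 * j) % 3 = 1 := by
  rw [pow_mul, Nat.pow_mod]; simp

theorem two_pow_mod_three_of_odd {a : ℕ} (ha : Odd a) : 2 ^ a % 3 = 2 := by
  obtain ⟨j, rfl⟩ := ha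
  rw [pow_succ, Nat.mul_mod, two_pow_mod_three_of_even]

/-- The distances from the two variables of `σ^k u^(2j)` to the top variable of
`σ^k u^(2j+1)` are `2^(2j+1) + 2^(2j) + 1 ≡ 1` and `2^(2j+1) + 1 ≡ 0 (mod 3)`,
while `2^a ≡ 2` for odd `a`. -/
theorem uHi_ne_uHi_succ_of_odd {a b j k : ℕ} (ha : Odd a)
    (h : uLo a b = uLo (2 * j) k ∨ uLo a b = uHi (2 * j) k) : uHi a b ≠ uHi (2 * j + 1) k := by
  have h₁ := two_pow_mod_three_of_odd ha
  have h₂ := two_pow_mod_three_of_odd (odd_two_mul_add_one j)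
  have h₃ := two_pow_mod_three_of_even j
  have h₄ := uLo_succ (2 * j) k
  rw [uHi_eq_uLo_add, uHi_eq_uLo_add, h₄, uHi_eq_uLo_add]
  rw [uHi_eq_uLo_add] at h
  omega

section Paired

variable (K : Type*) [Field K]

def pairedSubmodule : Submodule K (MvPolynomial ℕ K) where
  carrier := {f | (∀ μ, coeff μ f ≠ 0 → ∃ n k, μ = uExp n k) ∧
    ∀ j k, coeff (uExp (2 * j) k) f = coeff (uExp (2 * j + 1) k) f}
  zero_mem' := ⟨by simp, by simp⟩
  add_mem' {f g} hf hg := by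
    refine ⟨fun μ hμ => ?_, fun j k => by simp only [coeff_add, hf.2 j k, hg.2 j k]⟩
    by_cases hfμ : coeff μ f = 0
    · exact hg.1 μ (by simpa [hfμ] using hμ)
    · exact hf.1 μ hfμ
  smul_mem' c f hf :=
    ⟨fun μ hμ => hf.1 μ (right_ne_zero_of_mul (by simpa using hμ)),
      fun j k => by simp only [coeff_smul, hf.2 j k]⟩

variable {K}

theorem coeff_single_add_self_eq_zero_of_mem_paired {f : MvPolynomial ℕ K}
    (hf : f ∈ pairedSubmodule K) (u : ℕ) : coeff (single u 1 + single u 1) f = 0 := by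
  by_contra h
  obtain ⟨n, k, hμ⟩ := hf.1 _ h
  obtain ⟨rfl, h'⟩ := (single_add_single_eq_iff le_rfl (uLo_lt_uHi n k).le).mp hμ
  exact (uLo_lt_uHi n k).ne h'

theorem exists_uExp_of_mem_paired {f : MvPolynomial ℕ K} (hf : f ∈ pairedSubmodule K)
    {u v : ℕ} (huv : u < v) (h : coeff (single u 1 + single v 1) f ≠ 0) :
    ∃ n k, u = uLo n k ∧ v = uHi n k := by
  obtain ⟨n, k, hμ⟩ := hf.1 _ h
  exact ⟨n, k, (single_add_single_eq_iff huv.le (uLo_lt_uHi n k).le).mp hμ⟩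

theorem coeff_uExp_mul {L : MvPolynomial ℕ K} (hL : L.IsHomogeneous 1) (M : MvPolynomial ℕ K)
    (n k : ℕ) : coeff (uExp n k) (L * M) =
      coeff (single (uLo n k) 1) L * coeff (single (uHi n k) 1) M +
        coeff (single (uHi n k) 1) L * coeff (single (uLo n k) 1) M :=
  coeff_single_add_single_mul hL M (uLo_lt_uHi n k).ne

section TopVariable

variable {L M : MvPolynomial ℕ K} {v : ℕ}

theorem uHi_le_of_coeff_uExp_ne_zero (hL : L.IsHomogeneous 1)
    (hLv : ∀ w, coeff (single w 1) L ≠ 0 → w < v)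
    (hMv : ∀ w, coeff (single w 1) M ≠ 0 → w ≤ v)
    {n k : ℕ} (h : coeff (uExp n k) (L * M) ≠ 0) : uHi n k ≤ v := by
  rw [coeff_uExp_mul hL] at h
  by_cases hM : coeff (single (uHi n k) 1) M = 0
  · refine (hLv _ fun hL' => h ?_).le
    rw [hM, hL', mul_zero, zero_mul, add_zero]
  · exact hMv _ hM

theorem coeff_single_add_single_top_ne_zero (hL : L.IsHomogeneous 1)
    (hLv : ∀ w, coeff (single w 1) L ≠ 0 → w < v)
    (hv : coeff (single v 1) M ≠ 0) {w : ℕ} (hw : coeff (single w 1) L ≠ 0) :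
    coeff (single w 1 + single v 1) (L * M) ≠ 0 := by
  have hLv' : coeff (single v 1) L = 0 := by_contra fun h => (hLv v h).false
  rw [coeff_single_add_single_mul hL M (hLv w hw).ne, hLv', zero_mul, add_zero]
  exact mul_ne_zero hw hv

/-- Every variable of `L` is joined to the top variable `v` by some `σ^k u^(n)` with `n` odd:
for even `n` the partner `σ^k u^(n+1)` would involve variables beyond `v`. -/
theorem exists_odd_of_coeff_ne_zero (hL : L.IsHomogeneous 1) (hLM : L * M ∈ pairedSubmodule K)
    (hLv : ∀ w, coeff (single w 1) L ≠ 0 → w < v)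
    (hMv : ∀ w, coeff (single w 1) M ≠ 0 → w ≤ v)
    (hv : coeff (single v 1) M ≠ 0) {w : ℕ} (hw : coeff (single w 1) L ≠ 0) :
    ∃ n k, Odd n ∧ w = uLo n k ∧ v = uHi n k := by
  have hwv := coeff_single_add_single_top_ne_zero hL hLv hv hw
  obtain ⟨n, k, rfl, rfl⟩ := exists_uExp_of_mem_paired hLM (hLv w hw) hwv
  refine ⟨n, k, ?_, rfl, rfl⟩
  obtain ⟨j, rfl | rfl⟩ := Nat.even_or_odd' n
  · have hpartner := uHi_le_of_coeff_uExp_ne_zero hL hLv hMv ((hLM.2 j k).symm.trans_ne hwv)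
    have := uLo_lt_uHi (2 * j + 1) k
    rw [uLo_succ] at this
    omega
  · exact odd_two_mul_add_one j

theorem coeff_single_top_eq_zero (hL : L.IsHomogeneous 1) (hL0 : L ≠ 0)
    (hLM : L * M ∈ pairedSubmodule K) (hLv : ∀ w, coeff (single w 1) L ≠ 0 → w < v)
    (hMv : ∀ w, coeff (single w 1) M ≠ 0 → w ≤ v) :
    coeff (single v 1) M = 0 := by
  by_contra hv
  obtain ⟨u, hu⟩ := exists_coeff_single_ne_zero hL hL0
  obtain ⟨n, k, ⟨j, rfl⟩, rfl, rfl⟩ := exists_odd_of_coeff_ne_zero hL hLM hLv hMv hv hu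
  have hpartner : coeff (uExp (2 * j) k) (L * M) ≠ 0 :=
    (hLM.2 j k).trans_ne (coeff_single_add_single_top_ne_zero hL hLv hv hu)
  rw [coeff_uExp_mul hL] at hpartner
  obtain ⟨w, hwx, hw⟩ : ∃ w, (w = uLo (2 * j) k ∨ w = uHi (2 * j) k) ∧
      coeff (single w 1) L ≠ 0 := by
    by_contra! h
    simp [h _ (.inl rfl), h _ (.inr rfl)] at hpartner
  obtain ⟨a, b, ha, rfl, hv'⟩ := exists_odd_of_coeff_ne_zero hL hLM hLv hMv hv hw
  exact uHi_ne_uHi_succ_of_odd ha hwx hv'.symm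

end TopVariable

theorem mul_eq_zero_of_mem_paired {L M : MvPolynomial ℕ K} (hL : L.IsHomogeneous 1)
    (hM : M.IsHomogeneous 1) (hLM : L * M ∈ pairedSubmodule K) : L * M = 0 := by
  by_contra hLM0
  have hL0 := left_ne_zero_of_mul hLM0
  have hM0 := right_ne_zero_of_mul hLM0
  obtain ⟨u, hu, hLu⟩ := exists_max_coeff_single_ne_zero hL hL0
  obtain ⟨v, hv, hMv⟩ := exists_max_coeff_single_ne_zero hM hM0
  rcases lt_trichotomy u v with huv | rfl | hvu
  · exact hv (coeff_single_top_eq_zero hL hL0 hLM (fun w hw => (hLu w hw).trans_lt huv) hMv)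
  · exact mul_ne_zero hu hv
      ((coeff_single_add_self_mul hL M u).symm.trans
        (coeff_single_add_self_eq_zero_of_mem_paired hLM u))
  · rw [mul_comm] at hLM
    exact hu (coeff_single_top_eq_zero hM hM0 hLM (fun w hw => (hMv w hw).trans_lt hvu) hLu)

end Paired

section ShiftSpan

variable {K : Type*} [Field K] (σK : K →+* K)

noncomputable def shiftSpan (S : Set (MvPolynomial ℕ K)) : Submodule K (MvPolynomial ℕ K) :=
  Submodule.span K {x | ∃ a ∈ S, ∃ k : ℕ, x = (⇑(shift σK))^[k] a}

variable {σK}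

theorem monomial_uExp (n k : ℕ) :
    monomial (uExp n k) (1 : K) = X (uLo n k) * X (uHi n k) := by
  rw [uExp, monomial_single_add, pow_one]
  rfl

theorem shift_iterate_uPoly (n k : ℕ) :
    (shift σK)^[k] (uPoly K n) = monomial (uExp n k) 1 := by
  induction k with
  | zero => exact (monomial_uExp n 0).symm
  | succ k ih =>
    rw [Function.iterate_succ_apply', ih, monomial_uExp, monomial_uExp, map_mul, shift_X,
      shift_X]
    rfl

theorem shiftSpan_le_sigmaSpan {S : Set (MvPolynomial ℕ K)} :
    (shiftSpan σK S : Set (MvPolynomial ℕ K)) ⊆ sigmaSpan (shift σK) S :=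
  Submodule.span_le (p := (sigmaSpan (shift σK) S).restrictScalars K).mpr Ideal.subset_span

theorem shift_mem_shiftSpan {S : Set (MvPolynomial ℕ K)} {t : MvPolynomial ℕ K}
    (ht : t ∈ shiftSpan σK S) : shift σK t ∈ shiftSpan σK S := by
  induction ht using Submodule.span_induction with
  | mem x hx =>
    obtain ⟨a, ha, k, rfl⟩ := hx
    exact Submodule.subset_span ⟨a, ha, k + 1, (Function.iterate_succ_apply' _ k a).symm⟩
  | zero => rw [map_zero]; exact zero_mem _
  | add x y _ _ hx hy => rw [map_add]; exact add_mem hx hy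
  | smul c x _ hx => rw [shift_smul]; exact Submodule.smul_mem _ _ hx

theorem monomial_uExp_add_mem_paired (j k : ℕ) :
    monomial (uExp (2 * j) k) 1 + monomial (uExp (2 * j + 1) k) (1 : K) ∈ pairedSubmodule K := by
  refine ⟨fun μ hμ => ?_, fun j' k' => ?_⟩
  · rw [coeff_add, coeff_monomial, coeff_monomial] at hμ
    by_cases h₁ : uExp (2 * j) k = μ
    · exact ⟨_, _, h₁.symm⟩
    by_cases h₂ : uExp (2 * j + 1) k = μ
    · exact ⟨_, _, h₂.symm⟩
    simp [h₁, h₂] at hμ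
  · simp only [coeff_add, coeff_monomial, uExp_inj]
    split_ifs <;> first | omega | simp

theorem shift_iterate_APoly (i k : ℕ) : (shift σK)^[k] (APoly K (i + 1)) =
    monomial (uExp (2 * i) k) 1 + monomial (uExp (2 * i + 1) k) 1 := by
  rw [APoly, iterate_map_add, shift_iterate_uPoly, shift_iterate_uPoly]
  rfl

theorem shiftSpan_le_paired {S : Set (MvPolynomial ℕ K)}
    (hS : ∀ a ∈ S, ∃ i, 1 ≤ i ∧ a = APoly K i) :
    shiftSpan σK S ≤ pairedSubmodule K := by
  refine Submodule.span_le.mpr ?_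
  rintro _ ⟨a, ha, k, rfl⟩
  obtain ⟨i, hi, rfl⟩ := hS a ha
  obtain ⟨i, rfl⟩ := Nat.exists_eq_add_of_le' hi
  rw [shift_iterate_APoly]
  exact monomial_uExp_add_mem_paired i k

theorem uPoly_isHomogeneous (n : ℕ) : (uPoly K n).IsHomogeneous 2 :=
  (isHomogeneous_X K _).mul (isHomogeneous_X K _)

theorem APoly_isHomogeneous (i : ℕ) : (APoly K i).IsHomogeneous 2 :=
  (uPoly_isHomogeneous _).add (uPoly_isHomogeneous _)

end ShiftSpan

theorem stmt_11_general {K : Type*} [Field K] (σK : K →+* K) (m : ℕ)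
    (S : Set (MvPolynomial ℕ K)) (hS : S = {g | ∃ i, 1 ≤ i ∧ i ≤ m ∧ g = APoly K i})
    (W : Set (MvPolynomial ℕ K))
    (hW : W = {f | f ∈ sigmaSpan (shift σK) S ∧ f.IsHomogeneous 2})
    (Wn : ℕ → Set (MvPolynomial ℕ K))
    (hWn : ∀ n, Wn n = {f | f ∈ shuffle (shift σK) S n ∧ f.IsHomogeneous 2}) :
    ∀ n, 1 ≤ n → Wn n = W := by
  have hSA : ∀ a ∈ S, ∃ i, 1 ≤ i ∧ a = APoly K i := by
    rw [hS]; rintro _ ⟨i, hi, -, rfl⟩; exact ⟨i, hi, rfl⟩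
  have hSG : S ⊆ quadIdeal (shiftSpan σK S) := fun a ha => by
    obtain ⟨i, -, rfl⟩ := hSA a ha
    exact mem_quadIdeal_of_isHomogeneous (APoly_isHomogeneous i)
      (Submodule.subset_span ⟨_, ha, 0, rfl⟩)
  have hshuffle : ∀ n, shuffle (shift σK) S n ⊆ quadIdeal (shiftSpan σK S) :=
    shuffle_subset hSG (fun _ => shift_mem_quadIdeal σK fun _ => shift_mem_shiftSpan)
      fun _ _ => mul_shift_mem_quadIdeal σK (fun _ => shift_mem_shiftSpan)
        fun _ _ hL hM hLM => mul_eq_zero_of_mem_paired hL hM (shiftSpan_le_paired hSA hLM)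
  intro n hn
  obtain ⟨n, rfl⟩ := Nat.exists_eq_add_of_le' hn
  rw [hWn, hW]
  ext f
  refine and_congr_left fun hf => ⟨fun h => ?_, fun h => ?_⟩
  · have hfT := (hshuffle _ h).2
    rw [homogeneousComponent_eq_self hf] at hfT
    exact shiftSpan_le_sigmaSpan hfT
  · exact sigmaSpan_shuffle_subset_shuffle_succ n (sigmaSpan_mono (subset_shuffle n) h)

theorem stmt_11 {K : Type*} [Field K] (σK : K →+* K) (m : ℕ) (hm : 1 ≤ m)
    (S : Set (MvPolynomial ℕ K)) (hS : S = {g | ∃ i, 1 ≤ i ∧ i ≤ m ∧ g = APoly K i})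
    (W : Set (MvPolynomial ℕ K))
    (hW : W = {f | f ∈ sigmaSpan (shift σK) S ∧ f.IsHomogeneous 2})
    (Wn : ℕ → Set (MvPolynomial ℕ K))
    (hWn : ∀ n, Wn n = {f | f ∈ shuffle (shift σK) S n ∧ f.IsHomogeneous 2}) :
    ∀ n, 1 ≤ n → Wn n = W :=
  stmt_11_general σK m S hS W hW Wn hWn
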